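/- arXiv:2004.03858 — 2 statements merged into one kernel-verified Lean document; each statement's English description precedes it below -/
import Mathlib

section
/- Let 0 < r < 1/(4e), p ≥ 2, and set δ_p = ⌊(p−2)/(2|log r|)⌋ and c_ℓ^{(p)} = (ℓ^{p-1}/(2π(p-2)!))^{1/2}. Then for every m ∈ ℕ there exists C > 0 such that for all p ≥ 2, all ℓ ∈ {1,…,δ_p}, and all z with |z| ≤ p^{-1/(2α)} (where α > 0 is chosen with αp ≤ δ_p and δ_p + 1 ≤ p/2 for p large): |log(|z|²)|^p Σ_{j=δ_p+1}^∞ (c_j^{(p)})² |z|^{2j} ≤ C p^{-m} B_p^{D*}(z). -/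
/-!
Shifting the index by `δ + 1` costs at most the factor `(δ + 1)^(p-1) |z|^(2δ)` termwise, because
`j + δ + 1 ≤ (δ + 1)(j + 1)`. For `|z| ≤ p^(-1/(2α))`, `αp ≤ δ` and `δ + 1 ≤ p/2` this factor
is at most `(p/2)^(p-1) p^(-p) ≤ 2 · 2^(-p)`, which decays faster than every power of `p`.
-/

/-- `c_ℓ^{(p)} = (ℓ^{p-1}/(2π(p-2)!))^{1/2}`. -/
noncomputable def cc (p ℓ : ℕ) : ℝ :=
  Real.sqrt ((ℓ : ℝ) ^ (p - 1) / (2 * Real.pi * (Nat.factorial (p - 2))))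

/-- `B_p^{D*}(z) = |log(|z|²)|^p Σ_{j≥1} (c_j^{(p)})² |z|^{2j}`. -/
noncomputable def BpD (p : ℕ) (z : ℂ) : ℝ :=
  |Real.log ((‖z‖) ^ 2)| ^ p *
    ∑' j : ℕ, (cc p (j + 1)) ^ 2 * (‖z‖) ^ (2 * (j + 1))

/-- `δ_p = ⌊(p−2)/(2|log r|)⌋`. -/
noncomputable def δp (r : ℝ) (p : ℕ) : ℕ :=
  Int.toNat ⌊((p : ℝ) - 2) / (2 * |Real.log r|)⌋

open Filter Topology

lemma cc_sq (p ℓ : ℕ) :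
    cc p ℓ ^ 2 = (ℓ : ℝ) ^ (p - 1) / (2 * Real.pi * (Nat.factorial (p - 2))) :=
  Real.sq_sqrt (by positivity)

lemma summable_cc_sq_mul_pow (p : ℕ) {x : ℝ} (hx : |x| < 1) :
    Summable fun j : ℕ => cc p (j + 1) ^ 2 * x ^ (2 * (j + 1)) := by
  have hx2 : ‖x ^ 2‖ < 1 := by
    rw [norm_pow, Real.norm_eq_abs]
    exact pow_lt_one₀ (abs_nonneg x) hx two_ne_zero
  have hgeom : Summable fun j : ℕ => ((j + 1 : ℕ) : ℝ) ^ (p - 1) * (x ^ 2) ^ (j + 1) :=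
    (summable_nat_add_iff 1).2 <|
      summable_pow_mul_geometric_of_norm_lt_one (R := ℝ) (p - 1) hx2
  refine (hgeom.div_const (2 * Real.pi * (Nat.factorial (p - 2)))).congr fun j => ?_
  rw [cc_sq, pow_mul]
  ring

lemma cc_sq_mul_pow_shift_le (p j δ : ℕ) (x : ℝ) :
    cc p (j + δ + 1) ^ 2 * x ^ (2 * (j + δ + 1))
      ≤ ((δ : ℝ) + 1) ^ (p - 1) * x ^ (2 * δ) * (cc p (j + 1) ^ 2 * x ^ (2 * (j + 1))) := by
  have hshift : ((j + δ + 1 : ℕ) : ℝ) ^ (p - 1)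
      ≤ ((δ : ℝ) + 1) ^ (p - 1) * ((j + 1 : ℕ) : ℝ) ^ (p - 1) := by
    rw [← mul_pow]
    gcongr
    exact_mod_cast (by nlinarith : j + δ + 1 ≤ (δ + 1) * (j + 1))
  have hsplit : x ^ (2 * (j + δ + 1)) = x ^ (2 * δ) * x ^ (2 * (j + 1)) := by
    rw [← pow_add]; ring_nf
  have hx : 0 ≤ x ^ (2 * (j + 1)) := (even_two_mul _).pow_nonneg x
  have hxδ : 0 ≤ x ^ (2 * δ) := (even_two_mul _).pow_nonneg x
  rw [cc_sq, cc_sq, hsplit]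
  calc _ = ((j + δ + 1 : ℕ) : ℝ) ^ (p - 1) * (x ^ (2 * δ) * x ^ (2 * (j + 1)))
        / (2 * Real.pi * (Nat.factorial (p - 2))) := by ring
    _ ≤ ((δ : ℝ) + 1) ^ (p - 1) * ((j + 1 : ℕ) : ℝ) ^ (p - 1)
          * (x ^ (2 * δ) * x ^ (2 * (j + 1))) / (2 * Real.pi * (Nat.factorial (p - 2))) := by
      gcongr
    _ = _ := by ring

lemma tsum_cc_sq_mul_pow_shift_le (p δ : ℕ) {x : ℝ} (hx : |x| < 1) :
    ∑' j : ℕ, cc p (j + δ + 1) ^ 2 * x ^ (2 * (j + δ + 1))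
      ≤ ((δ : ℝ) + 1) ^ (p - 1) * x ^ (2 * δ) *
          ∑' j : ℕ, cc p (j + 1) ^ 2 * x ^ (2 * (j + 1)) := by
  have hS := (summable_cc_sq_mul_pow p hx).mul_left (((δ : ℝ) + 1) ^ (p - 1) * x ^ (2 * δ))
  have hnonneg : ∀ j : ℕ, 0 ≤ cc p (j + δ + 1) ^ 2 * x ^ (2 * (j + δ + 1)) := fun j =>
    mul_nonneg (sq_nonneg _) ((even_two_mul _).pow_nonneg x)
  rw [← tsum_mul_left]
  exact (hS.of_nonneg_of_le hnonneg (cc_sq_mul_pow_shift_le p · δ x)).tsum_le_tsum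
    (cc_sq_mul_pow_shift_le p · δ x) hS

lemma pow_mul_rpow_neg_le_two_mul_half_pow {α : ℝ} (hα : 0 < α) {p δ : ℕ} (hp : 1 ≤ p)
    (hαδ : α * p ≤ δ) (hδ : (δ : ℝ) + 1 ≤ p / 2) :
    ((δ : ℝ) + 1) ^ (p - 1) * (p : ℝ) ^ (-((δ : ℝ) / α)) ≤ 2 * (1 / 2) ^ p := by
  have hp1 : (1 : ℝ) ≤ p := by exact_mod_cast hp
  have hdecay : (p : ℝ) ^ (-((δ : ℝ) / α)) ≤ ((p : ℝ) ^ p)⁻¹ := by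
    rw [← Real.rpow_natCast, ← Real.rpow_neg (by positivity)]
    exact Real.rpow_le_rpow_of_exponent_le hp1 (neg_le_neg ((le_div_iff₀ hα).2 (by linarith)))
  have hsplit : ((p : ℝ) / 2) ^ (p - 1) * ((p : ℝ) ^ p)⁻¹ = 2 * (1 / 2) ^ p / p := by
    obtain ⟨k, rfl⟩ := Nat.exists_eq_add_of_le' hp
    simp only [Nat.add_sub_cancel, pow_succ, div_pow, one_pow]
    field_simp
  calc ((δ : ℝ) + 1) ^ (p - 1) * (p : ℝ) ^ (-((δ : ℝ) / α))
      ≤ ((p : ℝ) / 2) ^ (p - 1) * ((p : ℝ) ^ p)⁻¹ := by gcongr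
    _ = 2 * (1 / 2) ^ p / p := hsplit
    _ ≤ 2 * (1 / 2) ^ p := div_le_self (by positivity) hp1

lemma tendsto_pow_mul_shift_factor {α : ℝ} (hα : 0 < α) {δ : ℕ → ℕ}
    (hαδ : ∀ᶠ p : ℕ in atTop, α * p ≤ δ p ∧ (δ p : ℝ) + 1 ≤ p / 2) (m : ℕ) :
    Tendsto (fun p : ℕ =>
        (p : ℝ) ^ m * (((δ p : ℝ) + 1) ^ (p - 1) * (p : ℝ) ^ (-((δ p : ℝ) / α))))
      atTop (𝓝 0) := by
  have hgeom : Tendsto (fun p : ℕ => 2 * ((p : ℝ) ^ m * (1 / 2) ^ p)) atTop (𝓝 0) := by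
    simpa using (tendsto_pow_const_mul_const_pow_of_abs_lt_one m
      (show |(1 / 2 : ℝ)| < 1 by norm_num [abs_of_pos])).const_mul 2
  refine tendsto_of_tendsto_of_tendsto_of_le_of_le' tendsto_const_nhds hgeom
    (Eventually.of_forall fun p => by positivity) ?_
  filter_upwards [hαδ, eventually_ge_atTop 1] with p ⟨hαp, hδp⟩ hp
  calc _ ≤ (p : ℝ) ^ m * (2 * (1 / 2) ^ p) :=
        mul_le_mul_of_nonneg_left
          (pow_mul_rpow_neg_le_two_mul_half_pow hα hp hαp hδp) (by positivity)
    _ = _ := by ring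

lemma exists_pos_le_mul_rpow_neg_of_tendsto {f : ℕ → ℝ} {m : ℕ} {a : ℝ}
    (h : Tendsto (fun p : ℕ => (p : ℝ) ^ m * f p) atTop (𝓝 a)) :
    ∃ C > 0, ∀ p : ℕ, 1 ≤ p → f p ≤ C * (p : ℝ) ^ (-(m : ℝ)) := by
  obtain ⟨B, hB⟩ := h.bddAbove_range
  refine ⟨max B 1, by positivity, fun p hp => ?_⟩
  have hp0 : (0 : ℝ) < p := by exact_mod_cast hp
  have hfp : f p = (p : ℝ) ^ m * f p * (p : ℝ) ^ (-(m : ℝ)) := by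
    rw [Real.rpow_neg hp0.le, Real.rpow_natCast]
    field_simp
  rw [hfp]
  gcongr
  exact (hB ⟨p, rfl⟩).trans (le_max_left B 1)

lemma pow_le_rpow_neg_of_le_rpow_neg {x b α : ℝ} (hx : 0 ≤ x) (hb : 0 ≤ b)
    (hxb : x ≤ b ^ (-(1 / (2 * α)))) (n : ℕ) : x ^ (2 * n) ≤ b ^ (-((n : ℝ) / α)) := by
  calc x ^ (2 * n) ≤ (b ^ (-(1 / (2 * α)))) ^ (2 * n) := by gcongr
    _ = b ^ (-((n : ℝ) / α)) := by
      rw [← Real.rpow_natCast, ← Real.rpow_mul hb]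
      push_cast
      ring_nf

theorem stmt8_general (r : ℝ) (α : ℝ) (hα : 0 < α)
    (hαδ : ∃ p0 : ℕ, ∀ p : ℕ, p0 ≤ p →
      α * p ≤ (δp r p : ℝ) ∧ ((δp r p : ℝ) + 1) ≤ (p : ℝ) / 2) :
    ∀ m : ℕ, ∃ C > 0, ∀ p : ℕ, 2 ≤ p → ∀ z : ℂ,
      0 < ‖z‖ → ‖z‖ ≤ (p : ℝ) ^ (-(1 / (2 * α))) →
      |Real.log ((‖z‖) ^ 2)| ^ p *
          ∑' j : ℕ, (cc p (j + δp r p + 1)) ^ 2 * (‖z‖) ^ (2 * (j + δp r p + 1))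
        ≤ C * (p : ℝ) ^ (-(m : ℝ)) * BpD p z := by
  intro m
  obtain ⟨C, hC, hbound⟩ := exists_pos_le_mul_rpow_neg_of_tendsto
    (tendsto_pow_mul_shift_factor hα (eventually_atTop.2 hαδ) m)
  refine ⟨C, hC, fun p hp z _ hz => ?_⟩
  have hp1 : (1 : ℝ) < p := by exact_mod_cast hp
  have hz1 : |‖z‖| < 1 := by
    rw [abs_norm]
    exact hz.trans_lt (Real.rpow_lt_one_of_one_lt_of_neg hp1 (by simp [hα]))
  have hfactor :
      ((δp r p : ℝ) + 1) ^ (p - 1) * ‖z‖ ^ (2 * δp r p) ≤ C * (p : ℝ) ^ (-(m : ℝ)) :=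
    (mul_le_mul_of_nonneg_left
      (pow_le_rpow_neg_of_le_rpow_neg (norm_nonneg z) (by positivity) hz _) (by positivity)).trans
      (hbound p (by omega))
  rw [BpD, mul_left_comm]
  gcongr
  exact (tsum_cc_sq_mul_pow_shift_le p (δp r p) hz1).trans
    (mul_le_mul_of_nonneg_right hfactor (tsum_nonneg fun j => by positivity))

/-- On the shrinking discs `|z| ≤ p^{-1/(2α)}`, the tail of the Bergman series beyond
index `δ_p` is `O(p^{-∞})` relative to `B_p^{D*}`. -/
theorem stmt8 (r : ℝ) (hr0 : 0 < r) (hr1 : r < 1 / (4 * Real.exp 1))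
    (α : ℝ) (hα : 0 < α)
    (hαδ : ∃ p0 : ℕ, ∀ p : ℕ, p0 ≤ p →
      α * p ≤ (δp r p : ℝ) ∧ ((δp r p : ℝ) + 1) ≤ (p : ℝ) / 2) :
    ∀ m : ℕ, ∃ C > 0, ∀ p : ℕ, 2 ≤ p → ∀ z : ℂ,
      0 < ‖z‖ → ‖z‖ ≤ (p : ℝ) ^ (-(1 / (2 * α))) →
      |Real.log ((‖z‖) ^ 2)| ^ p *
          ∑' j : ℕ, (cc p (j + δp r p + 1)) ^ 2 * (‖z‖) ^ (2 * (j + δp r p + 1))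
        ≤ C * (p : ℝ) ^ (-(m : ℝ)) * BpD p z :=
  stmt8_general r α hα hαδ
end

section
/- Let H be a complex inner product space, V ⊂ H a closed subspace, and (φ_ℓ)_{1≤ℓ≤δ} a family in V with |⟨φ_j, φ_ℓ⟩ − δ_{jℓ}| ≤ ε for all j, ℓ, where 0 < ε < 1/(4δ). Let (σ_ℓ) be the Gram–Schmidt orthonormalization of (φ_ℓ). Then there is a constant C depending only polynomially on δ such that ‖σ_ℓ − φ_ℓ‖ ≤ C δ ε for all ℓ ∈ {1,…,δ}. -/
/-!
Write `ψ` for the unnormalized Gram–Schmidt vectors and `σ` for the normalized ones. Since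
`ψ n = φ n - ∑_{i<n} ⟪σ i, φ n⟫ σ i`, and `⟪σ i, φ n⟫` differs from `⟪φ i, φ n⟫ = O(ε)` by at
most `‖σ i - φ i‖ ‖φ n‖`, the error `‖ψ n - φ n‖` is controlled by the errors at earlier indices.
Normalizing `ψ n` costs at most `|1 - ‖φ n‖| ≤ ε` more than twice that, so strong induction on `n`
gives `‖σ n - φ n‖ ≤ K n ε` with `K n = 1 + 2 ∑_{i<n} (2 K i + 1)`, which is `(3 * 5 ^ n - 1) / 2`.
-/

open Finset InnerProductSpace
open scoped InnerProductSpace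

section

variable {𝕜 E : Type*} [RCLike 𝕜] [NormedAddCommGroup E] [InnerProductSpace 𝕜 E]

theorem norm_inv_norm_smul_sub_self_le (y : E) :
    ‖(‖y‖ : 𝕜)⁻¹ • y - y‖ ≤ |1 - ‖y‖| := by
  rcases eq_or_ne y 0 with rfl | hy
  · simp
  have hy' : 0 < ‖y‖ := norm_pos_iff.mpr hy
  have hsmul : (‖y‖ : 𝕜)⁻¹ • y - y = ((‖y‖⁻¹ - 1 : ℝ) : 𝕜) • y := by
    rw [RCLike.ofReal_sub, RCLike.ofReal_inv, RCLike.ofReal_one, sub_smul, one_smul]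
  rw [hsmul, norm_smul, RCLike.norm_ofReal, ← abs_of_pos hy', ← abs_mul, abs_of_pos hy']
  exact le_of_eq (congrArg abs (by field_simp))

theorem norm_inv_norm_smul_sub_le (x y : E) :
    ‖(‖y‖ : 𝕜)⁻¹ • y - x‖ ≤ |1 - ‖x‖| + 2 * ‖y - x‖ := by
  have h₁ := norm_sub_le_norm_sub_add_norm_sub ((‖y‖ : 𝕜)⁻¹ • y) y x
  have h₂ := norm_inv_norm_smul_sub_self_le (𝕜 := 𝕜) y
  have h₃ := abs_sub_le 1 ‖x‖ ‖y‖
  have h₄ := abs_norm_sub_norm_le x y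
  rw [norm_sub_rev x y] at h₄
  linarith

theorem starProjection_singleton_eq_inner_normalize_smul (v w : E) :
    (𝕜 ∙ v).starProjection w = ⟪(‖v‖ : 𝕜)⁻¹ • v, w⟫_𝕜 • ((‖v‖ : 𝕜)⁻¹ • v) := by
  rcases eq_or_ne v 0 with rfl | hv
  · simp [Submodule.span_zero_singleton]
  have hc : (‖v‖ : 𝕜)⁻¹ ≠ 0 := by simpa using hv
  simp_rw [← Submodule.span_singleton_smul_eq hc.isUnit v]
  exact Submodule.starProjection_unit_singleton 𝕜 (norm_smul_inv_norm hv) w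

theorem abs_norm_sub_one_le_norm_inner_self_sub_one (x : E) :
    |‖x‖ - 1| ≤ ‖⟪x, x⟫_𝕜 - 1‖ := by
  rw [inner_self_eq_norm_sq_to_K, ← RCLike.ofReal_one (K := 𝕜), ← RCLike.ofReal_pow,
    ← RCLike.ofReal_sub, RCLike.norm_ofReal,
    show ‖x‖ ^ 2 - 1 = (‖x‖ - 1) * (‖x‖ + 1) by ring, abs_mul]
  have : 1 ≤ |‖x‖ + 1| := by rw [abs_of_nonneg (by positivity)]; linarith [norm_nonneg x]
  nlinarith [abs_nonneg (‖x‖ - 1)]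

theorem norm_gramSchmidt_sub_self_le {ι : Type*} [LinearOrder ι] [LocallyFiniteOrderBot ι]
    [WellFoundedLT ι] (f : ι → E) (n : ι) :
    ‖gramSchmidt 𝕜 f n - f n‖ ≤ ∑ i ∈ Iio n, ‖⟪gramSchmidtNormed 𝕜 f i, f n⟫_𝕜‖ := by
  rw [gramSchmidt_def, sub_sub_cancel_left, norm_neg]
  refine (norm_sum_le _ _).trans (sum_le_sum fun i _ => ?_)
  rw [starProjection_singleton_eq_inner_normalize_smul, ← gramSchmidtNormed, norm_smul]
  rcases eq_or_ne (gramSchmidtNormed 𝕜 f i) 0 with h | h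
  · simp [h]
  · rw [gramSchmidtNormed_unit_length' h, mul_one]

noncomputable def gramSchmidtErrorConst (n : ℕ) : ℝ := (3 * 5 ^ n - 1) / 2

theorem one_add_two_mul_sum_gramSchmidtErrorConst (n : ℕ) :
    1 + 2 * ∑ i ∈ range n, (2 * gramSchmidtErrorConst i + 1) = gramSchmidtErrorConst n := by
  induction n with
  | zero => norm_num [gramSchmidtErrorConst]
  | succ n ih =>
    rw [sum_range_succ]
    simp only [gramSchmidtErrorConst, pow_succ] at ih ⊢
    linarith

theorem norm_gramSchmidtNormed_sub_le {f : ℕ → E} {δ : ℕ} {ε : ℝ} (hε : ε ≤ 1)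
    (hf : ∀ j ℓ, j < δ → ℓ < δ → ‖⟪f j, f ℓ⟫_𝕜 - if j = ℓ then 1 else 0‖ ≤ ε) :
    ∀ n < δ, ‖gramSchmidtNormed 𝕜 f n - f n‖ ≤ gramSchmidtErrorConst n * ε := by
  intro n
  induction n using Nat.strong_induction_on with
  | _ n ih =>
  intro hn
  have hnorm : |1 - ‖f n‖| ≤ ε := by
    rw [abs_sub_comm]
    exact (abs_norm_sub_one_le_norm_inner_self_sub_one (f n)).trans (by simpa using hf n n hn hn)
  have hfn : ‖f n‖ ≤ 2 := by linarith [(abs_le.mp hnorm).1]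
  have hinner : ∀ i < n,
      ‖⟪gramSchmidtNormed 𝕜 f i, f n⟫_𝕜‖ ≤ (2 * gramSchmidtErrorConst i + 1) * ε := by
    intro i hi
    have hoff : ‖⟪f i, f n⟫_𝕜‖ ≤ ε := by simpa [hi.ne] using hf i n (hi.trans hn) hn
    have hprev := ih i hi (hi.trans hn)
    calc ‖⟪gramSchmidtNormed 𝕜 f i, f n⟫_𝕜‖
        = ‖⟪gramSchmidtNormed 𝕜 f i - f i, f n⟫_𝕜 + ⟪f i, f n⟫_𝕜‖ := by
          rw [inner_sub_left, sub_add_cancel]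
      _ ≤ ‖gramSchmidtNormed 𝕜 f i - f i‖ * ‖f n‖ + ‖⟪f i, f n⟫_𝕜‖ :=
          (norm_add_le _ _).trans (by gcongr; exact norm_inner_le_norm _ _)
      _ ≤ gramSchmidtErrorConst i * ε * 2 + ε := by
          gcongr
          exact (norm_nonneg _).trans hprev
      _ = (2 * gramSchmidtErrorConst i + 1) * ε := by ring
  have hψ : ‖gramSchmidt 𝕜 f n - f n‖
      ≤ (∑ i ∈ range n, (2 * gramSchmidtErrorConst i + 1)) * ε := by
    rw [sum_mul, ← Nat.Iio_eq_range]
    exact (norm_gramSchmidt_sub_self_le f n).trans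
      (sum_le_sum fun i hi => hinner i (mem_Iio.mp hi))
  calc ‖gramSchmidtNormed 𝕜 f n - f n‖
      ≤ |1 - ‖f n‖| + 2 * ‖gramSchmidt 𝕜 f n - f n‖ := norm_inv_norm_smul_sub_le _ _
    _ ≤ ε + 2 * ((∑ i ∈ range n, (2 * gramSchmidtErrorConst i + 1)) * ε) := by gcongr
    _ = gramSchmidtErrorConst n * ε := by
        rw [← one_add_two_mul_sum_gramSchmidtErrorConst]; ring

end

/-- Quantitative stability of Gram–Schmidt orthonormalization: given an almost-orthonormal
family `(φ_ℓ)_{ℓ<δ}` in a closed subspace `V` of a complex inner product space `H`, with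
`|⟨φ_j, φ_ℓ⟩ − δ_{jℓ}| ≤ ε` and `0 < ε < 1/(4δ)`, the Gram–Schmidt orthonormalization
`(σ_ℓ)` satisfies `‖σ_ℓ − φ_ℓ‖ ≤ C δ ε` with `C` depending only on `δ`. -/
theorem stmt16 (δ : ℕ) :
    ∃ C > (0 : ℝ), ∀ (H : Type) [NormedAddCommGroup H] [InnerProductSpace ℂ H]
      (V : Submodule ℂ H), IsClosed (V : Set H) →
      ∀ (φ : ℕ → H), (∀ ℓ, ℓ < δ → φ ℓ ∈ V) →
      ∀ (ε : ℝ), 0 < ε → ε < 1 / (4 * δ) →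
      (∀ j ℓ, j < δ → ℓ < δ →
        ‖(inner ℂ (φ j) (φ ℓ) : ℂ) - (if j = ℓ then 1 else 0)‖ ≤ ε) →
      ∀ ℓ, ℓ < δ → ‖InnerProductSpace.gramSchmidtNormed ℂ φ ℓ - φ ℓ‖ ≤ C * δ * ε := by
  refine ⟨3 * 5 ^ δ, by positivity, ?_⟩
  intro H _ _ V _ φ _ ε hε hεδ hφ ℓ hℓ
  have hδ : (1 : ℝ) ≤ δ := by exact_mod_cast Nat.zero_lt_of_lt hℓ
  have hε1 : ε ≤ 1 := by
    refine hεδ.le.trans ?_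
    rw [div_le_one (by positivity)]
    linarith
  have hK : gramSchmidtErrorConst ℓ ≤ 3 * 5 ^ δ * δ := by
    have h5 : (5 : ℝ) ^ ℓ ≤ 5 ^ δ := pow_le_pow_right₀ (by norm_num) hℓ.le
    unfold gramSchmidtErrorConst
    nlinarith [pow_pos (by norm_num : (0 : ℝ) < 5) δ]
  calc ‖gramSchmidtNormed ℂ φ ℓ - φ ℓ‖ ≤ gramSchmidtErrorConst ℓ * ε :=
        norm_gramSchmidtNormed_sub_le hε1 hφ ℓ hℓ
    _ ≤ 3 * 5 ^ δ * δ * ε := by gcongr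
end
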